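/- arXiv:1910.02402 — 4 statements merged into one kernel-verified Lean document; each statement's English description precedes it below -/
import Mathlib

section
/- Let Θ be a closed linear subspace of ℓ∞ containing the canonical copy of c0. If Θ, with the norm induced from ℓ∞, is 1-separably injective, then Θ = ℓ∞. -/
open Filter

/-- `c₀`: the subspace of `ℓ∞` of real sequences converging to `0`. -/
noncomputable def c0 : Submodule ℝ (lp (fun _ : ℕ => ℝ) ⊤) where
  carrier := {f | Tendsto (⇑f) atTop (nhds 0)}
  add_mem' := by
    intro f g hf hg
    show Tendsto (⇑(f + g)) atTop (nhds 0)
    have hadd : ⇑(f + g) = ⇑f + ⇑g := lp.coeFn_add f g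
    rw [hadd]
    have h := hf.add hg
    rw [add_zero] at h
    exact h
  zero_mem' := by
    have h0 : ⇑(0 : lp (fun _ : ℕ => ℝ) ⊤) = (0 : ∀ _ : ℕ, ℝ) := lp.coeFn_zero _ _
    show Tendsto _ atTop (nhds 0)
    rw [h0]
    exact tendsto_const_nhds
  smul_mem' := by
    intro c f hf
    show Tendsto (⇑(c • f)) atTop (nhds 0)
    have hsmul : ⇑(c • f) = c • ⇑f := lp.coeFn_smul c f
    rw [hsmul]
    have h := hf.const_smul c
    rw [smul_zero] at h
    exact h

/-- A real Banach space `X` is 1-separably injective: every bounded operator from a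
closed subspace of any separable Banach space into `X` extends with the same norm
bound. -/
def IsOneSepInjective (X : Type) [NormedAddCommGroup X] [NormedSpace ℝ X] : Prop :=
  ∀ (F : Type) [NormedAddCommGroup F] [NormedSpace ℝ F] [CompleteSpace F]
    [TopologicalSpace.SeparableSpace F],
    ∀ (E : Subspace ℝ F), IsClosed (E : Set F) →
      ∀ (t : E →L[ℝ] X), ∃ T : F →L[ℝ] X, (∀ e : E, T e = t e) ∧ ‖T‖ ≤ ‖t‖

/-!
Given `x ∈ ℓ∞`, let `F` be the closed span of `x` and the unit vectors `eₙ`. Separable injectivity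
extends the inclusion `Θ ∩ F → Θ` to an operator `T : F → Θ` of norm at most one, so `y = T x ∈ Θ`
is at least as close as `x` to every `c • eₙ`. Taking `c = xₙ ± ‖x‖` squeezes `yₙ` to `xₙ`,
hence `x = y ∈ Θ`.
-/

open scoped ENNReal

theorem IsOneSepInjective.exists_forall_norm_sub_le {V : Type} [NormedAddCommGroup V]
    [NormedSpace ℝ V] [CompleteSpace V] {Θ : Submodule ℝ V} (hΘ : IsClosed (Θ : Set V))
    (hinj : IsOneSepInjective Θ) (x : V) {s : Set V} (hs : s.Countable) (hsΘ : s ⊆ Θ) :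
    ∃ y ∈ Θ, ∀ f ∈ Submodule.span ℝ s, ‖y - f‖ ≤ ‖x - f‖ := by
  let F := (Submodule.span ℝ (insert x s)).topologicalClosure
  have hFclosed : IsClosed (F : Set V) := Submodule.isClosed_topologicalClosure _
  have : CompleteSpace F := hFclosed.completeSpace_coe
  have : TopologicalSpace.SeparableSpace F := by
    have := ((hs.insert x).isSeparable.span (R := ℝ)).closure
    rw [← Submodule.topologicalClosure_coe] at this
    exact this.separableSpace
  have hspanF : Submodule.span ℝ (insert x s) ≤ F := Submodule.le_topologicalClosure _
  let E := Θ.comap F.subtype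
  have hEclosed : IsClosed (E : Set F) := hΘ.preimage continuous_subtype_val
  let t : E →L[ℝ] Θ := (F.subtypeL.comp E.subtypeL).codRestrict Θ fun v => v.2
  have ht : ‖t‖ ≤ 1 := t.opNorm_le_bound zero_le_one fun v => by rw [one_mul]; rfl
  obtain ⟨T, hTt, hT⟩ := hinj F E hEclosed t
  have hxF : x ∈ F := hspanF (Submodule.subset_span (Set.mem_insert _ _))
  refine ⟨T ⟨x, hxF⟩, (T ⟨x, hxF⟩).2, fun f hf => ?_⟩
  have hfF : f ∈ F := hspanF (Submodule.span_mono (Set.subset_insert _ _) hf)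
  have hfΘ : f ∈ Θ := Submodule.span_le.2 hsΘ hf
  have hTf : T ⟨f, hfF⟩ = ⟨f, hfΘ⟩ := hTt ⟨⟨f, hfF⟩, hfΘ⟩
  calc ‖(T ⟨x, hxF⟩ : V) - f‖ = ‖T (⟨x, hxF⟩ - ⟨f, hfF⟩)‖ := by
        rw [map_sub, hTf]; rfl
    _ ≤ 1 * ‖(⟨x, hxF⟩ - ⟨f, hfF⟩ : F)‖ := T.le_of_opNorm_le (hT.trans ht) _
    _ = ‖x - f‖ := one_mul _

namespace lp

variable {ι : Type*} [DecidableEq ι]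

theorem norm_sub_single_le {x : lp (fun _ : ι => ℝ) ∞} {i : ι} {c : ℝ} (hc : |x i - c| ≤ ‖x‖) :
    ‖x - lp.single ∞ i c‖ ≤ ‖x‖ := by
  refine lp.norm_le_of_forall_le (norm_nonneg x) fun j => ?_
  rcases eq_or_ne j i with rfl | hji
  · simpa using hc
  · simpa [Pi.single_eq_of_ne hji] using lp.norm_apply_le_norm ENNReal.top_ne_zero x j

theorem eq_of_forall_norm_sub_single_le {x y : lp (fun _ : ι => ℝ) ∞}
    (h : ∀ i (c : ℝ), ‖y - lp.single ∞ i c‖ ≤ ‖x - lp.single ∞ i c‖) : y = x := by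
  ext i
  have hdist (c : ℝ) (hc : |x i - c| ≤ ‖x‖) : |y i - c| ≤ ‖x‖ := by
    calc |y i - c| = ‖(y - lp.single ∞ i c : lp (fun _ : ι => ℝ) ∞) i‖ := by simp
      _ ≤ ‖y - lp.single ∞ i c‖ := lp.norm_apply_le_norm ENNReal.top_ne_zero _ i
      _ ≤ ‖x - lp.single ∞ i c‖ := h i c
      _ ≤ ‖x‖ := norm_sub_single_le hc
  have hplus := abs_le.1 (hdist (x i + ‖x‖) (by simp))
  have hminus := abs_le.1 (hdist (x i - ‖x‖) (by simp))
  linarith [hplus.1, hminus.2]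

end lp

theorem lp.single_mem_c0 (n : ℕ) (a : ℝ) : lp.single (E := fun _ : ℕ => ℝ) ∞ n a ∈ c0 := by
  refine tendsto_const_nhds.congr' ?_
  filter_upwards [eventually_gt_atTop n] with k hk
  exact (lp.single_apply_ne (E := fun _ : ℕ => ℝ) ∞ n a hk.ne').symm

/-- A closed subspace of `ℓ∞` containing the canonical copy of `c₀` which is
1-separably injective (in the induced norm) must be all of `ℓ∞`. -/
theorem oneSepInjective_subspace_of_linfty_containing_c0_eq_linfty
    (Θ : Submodule ℝ (lp (fun _ : ℕ => ℝ) ⊤))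
    (hclosed : IsClosed (Θ : Set (lp (fun _ : ℕ => ℝ) ⊤)))
    (hc0 : c0 ≤ Θ)
    (hinj : IsOneSepInjective ↥Θ) :
    Θ = ⊤ := by
  refine eq_top_iff.2 fun x _ => ?_
  let e (n : ℕ) : lp (fun _ : ℕ => ℝ) ∞ := lp.single ∞ n 1
  obtain ⟨y, hyΘ, hy⟩ := hinj.exists_forall_norm_sub_le hclosed x (Set.countable_range e)
    (Set.range_subset_iff.2 fun n => hc0 (lp.single_mem_c0 n 1))
  have hyx : y = x := lp.eq_of_forall_norm_sub_single_le fun n c => by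
    simpa [e, ← lp.single_smul] using
      hy _ (Submodule.smul_mem _ c (Submodule.subset_span (Set.mem_range_self n)))
  exact hyx ▸ hyΘ
end

section
/- Let x = (x_n) ∈ ℓ∞ be nonzero and let S_x = {(x_n + ‖x‖)·e_n : n ∈ ℕ} ∪ {(x_n − ‖x‖)·e_n : n ∈ ℕ}, a countable subset of c0. Then S_x has diameter 2‖x‖, and x is the unique element y ∈ ℓ∞ satisfying ‖s − y‖ ≤ ‖x‖ for every s ∈ S_x. -/
open Filter

/-!
Every point of `S_x` lies on a coordinate axis at distance exactly `‖x‖` from `xₙ` in its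
own coordinate, and within `‖x‖` of `x` in every other coordinate, so `S_x` lies in the
closed ball of radius `‖x‖` about `x`; the two points on the `n`-th axis are `2‖x‖` apart,
which gives the diameter. A center `y` must have `yₙ` within `‖x‖` of both `xₙ + ‖x‖` and
`xₙ - ‖x‖`, which forces `yₙ = xₙ`.
-/

section Single

variable {ι : Type*} [DecidableEq ι]

lemma smul_lp_single_one (c : ℝ) (n : ι) :
    c • lp.single ⊤ n (1 : ℝ) = lp.single (E := fun _ : ι => ℝ) ⊤ n c := by
  rw [← lp.single_smul, smul_eq_mul, mul_one]

lemma abs_sub_apply_le_norm_single_sub (y : lp (fun _ : ι => ℝ) ⊤) (n : ι) (c : ℝ) :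
    |c - y n| ≤ ‖lp.single ⊤ n c - y‖ := by
  have h := lp.norm_apply_le_norm ENNReal.top_ne_zero (lp.single ⊤ n c - y) n
  rwa [lp.coeFn_sub, Pi.sub_apply, lp.single_apply_self, Real.norm_eq_abs] at h

lemma norm_single_sub_le {x : lp (fun _ : ι => ℝ) ⊤} {r c : ℝ} (n : ι) (hx : ‖x‖ ≤ r)
    (hc : |c - x n| ≤ r) : ‖lp.single ⊤ n c - x‖ ≤ r := by
  refine lp.norm_le_of_forall_le ((norm_nonneg x).trans hx) fun m => ?_
  rcases eq_or_ne m n with rfl | hmn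
  · simpa using hc
  · simpa [Pi.single_eq_of_ne hmn] using
      (lp.norm_apply_le_norm ENNReal.top_ne_zero x m).trans hx

end Single

lemma lp.single_mem_c0_s8 (n : ℕ) (c : ℝ) : lp.single ⊤ n c ∈ c0 :=
  tendsto_const_nhds.congr' <| (eventually_gt_atTop n).mono fun _ hm =>
    (lp.single_apply_ne (E := fun _ : ℕ => ℝ) ⊤ n c hm.ne').symm

lemma Metric.diam_eq_of_subset_closedBall_of_dist_eq {X : Type*} [PseudoMetricSpace X]
    {s : Set X} {x a b : X} {r : ℝ} (hs : s ⊆ Metric.closedBall x r) (ha : a ∈ s) (hb : b ∈ s)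
    (hab : dist a b = 2 * r) : Metric.diam s = 2 * r := by
  have hr : 0 ≤ r := by linarith [dist_nonneg (x := a) (y := b)]
  refine le_antisymm (Metric.diam_le_of_subset_closedBall hr hs) ?_
  exact hab ▸ Metric.dist_le_diam_of_mem (Metric.isBounded_closedBall.subset hs) ha hb

lemma eq_of_abs_add_sub_le_of_abs_sub_sub_le {a b r : ℝ} (h₁ : |a + r - b| ≤ r)
    (h₂ : |a - r - b| ≤ r) : b = a := by
  rw [abs_le] at h₁ h₂
  linarith [h₁.1, h₂.2]

theorem unique_center_of_Sx_general
    (x : lp (fun _ : ℕ => ℝ) ⊤)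
    (S : Set (lp (fun _ : ℕ => ℝ) ⊤))
    (hS : S = (Set.range fun n : ℕ => (x n + ‖x‖) • lp.single ⊤ n (1 : ℝ)) ∪
              (Set.range fun n : ℕ => (x n - ‖x‖) • lp.single ⊤ n (1 : ℝ))) :
    S.Countable ∧ (∀ s ∈ S, s ∈ c0) ∧ Metric.diam S = 2 * ‖x‖ ∧
      (∀ s ∈ S, ‖s - x‖ ≤ ‖x‖) ∧
      (∀ y : lp (fun _ : ℕ => ℝ) ⊤, (∀ s ∈ S, ‖s - y‖ ≤ ‖x‖) → y = x) := by
  simp only [smul_lp_single_one] at hS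
  have hplus (n : ℕ) : lp.single ⊤ n (x n + ‖x‖) ∈ S := hS ▸ Or.inl ⟨n, rfl⟩
  have hminus (n : ℕ) : lp.single ⊤ n (x n - ‖x‖) ∈ S := hS ▸ Or.inr ⟨n, rfl⟩
  have hball : ∀ s ∈ S, ‖s - x‖ ≤ ‖x‖ := by
    rw [hS]
    rintro s (⟨n, rfl⟩ | ⟨n, rfl⟩) <;> exact norm_single_sub_le n le_rfl (by simp)
  refine ⟨hS ▸ (Set.countable_range _).union (Set.countable_range _), ?_, ?_, hball, ?_⟩
  · rw [hS]
    rintro s (⟨n, rfl⟩ | ⟨n, rfl⟩) <;> exact lp.single_mem_c0_s8 n _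
  · refine Metric.diam_eq_of_subset_closedBall_of_dist_eq (x := x)
      (fun s hs => by simpa [dist_eq_norm] using hball s hs) (hplus 0) (hminus 0) ?_
    rw [dist_eq_norm, ← lp.single_sub, lp.norm_single ENNReal.zero_lt_top]
    simp [two_mul]
  · intro y hy
    ext n
    exact eq_of_abs_add_sub_le_of_abs_sub_sub_le
      ((abs_sub_apply_le_norm_single_sub y n _).trans (hy _ (hplus n)))
      ((abs_sub_apply_le_norm_single_sub y n _).trans (hy _ (hminus n)))

/-- For nonzero `x ∈ ℓ∞`, the set `S_x = {(xₙ + ‖x‖)eₙ} ∪ {(xₙ − ‖x‖)eₙ}` is a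
countable subset of `c₀` of diameter `2‖x‖` whose unique "center" at radius `‖x‖`
is `x` itself. -/
theorem unique_center_of_Sx
    (x : lp (fun _ : ℕ => ℝ) ⊤) (hx : x ≠ 0)
    (S : Set (lp (fun _ : ℕ => ℝ) ⊤))
    (hS : S = (Set.range fun n : ℕ => (x n + ‖x‖) • lp.single ⊤ n (1 : ℝ)) ∪
              (Set.range fun n : ℕ => (x n - ‖x‖) • lp.single ⊤ n (1 : ℝ))) :
    S.Countable ∧ (∀ s ∈ S, s ∈ c0) ∧ Metric.diam S = 2 * ‖x‖ ∧
      (∀ s ∈ S, ‖s - x‖ ≤ ‖x‖) ∧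
      (∀ y : lp (fun _ : ℕ => ℝ) ⊤, (∀ s ∈ S, ‖s - y‖ ≤ ‖x‖) → y = x) :=
  unique_center_of_Sx_general x S hS
end

section
/- For every infinite-dimensional real Banach space X, one has K(X) ≤ e_1^s(X, c0). -/
open Filter

/-- The Kottman constant: the supremum of separation constants of sequences in the
closed unit ball. -/
noncomputable def Kottman (Y : Type) [SeminormedAddCommGroup Y] : ℝ :=
  sSup {c : ℝ | ∃ y : ℕ → Y, (∀ n, ‖y n‖ ≤ 1) ∧
    c = sInf {d : ℝ | ∃ n m : ℕ, n ≠ m ∧ d = ‖y n - y m‖}}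

/-- `e₁ˢ(Y, X)`: the infimum of all `l > 0` such that every Lipschitz map from a
separable subset `M ⊆ Y` into `X` extends to any one extra point with Lipschitz
constant multiplied by at most `l`. -/
noncomputable def e1s (Y X : Type) [SeminormedAddCommGroup Y] [SeminormedAddCommGroup X] : ℝ :=
  sInf {l : ℝ | 0 < l ∧ ∀ (M : Set Y), TopologicalSpace.IsSeparable M → ∀ (p : Y)
    (f : M → X) (K : NNReal), LipschitzWith K f →
    ∃ F : ↥(insert p M : Set Y) → X, LipschitzWith (l.toNNReal * K) F ∧
      ∀ (y : Y) (hy : y ∈ M), F ⟨y, Set.mem_insert_of_mem p hy⟩ = f ⟨y, hy⟩}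


set_option synthInstance.maxHeartbeats 1000000 in
lemma c0_isClosed' : IsClosed {f : lp (fun _ : ℕ => ℝ) ⊤ | Tendsto (⇑f) atTop (nhds 0)} := by
  apply IsSeqClosed.isClosed
  intro x q hx hxq
  show Tendsto (⇑q) atTop (nhds 0)
  rw [Metric.tendsto_atTop]
  intro ε hε
  have hnorm : Tendsto (fun j => ‖x j - q‖) atTop (nhds 0) :=
    tendsto_iff_norm_sub_tendsto_zero.1 hxq
  obtain ⟨j, hj⟩ := (Metric.tendsto_atTop.1 hnorm (ε/2) (by linarith)).imp
    (fun j h => h j le_rfl)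
  rw [Real.dist_eq, sub_zero, abs_of_nonneg (norm_nonneg _)] at hj
  obtain ⟨N, hN⟩ := Metric.tendsto_atTop.1 (hx j) (ε/2) (by linarith)
  refine ⟨N, fun n hn => ?_⟩
  have h1 : ‖(x j - q) n‖ ≤ ‖x j - q‖ := lp.norm_apply_le_norm ENNReal.top_ne_zero _ n
  have h2 : (x j - q) n = x j n - q n := by rw [lp.coeFn_sub]; rfl
  have h3 := hN n hn
  rw [Real.dist_eq, sub_zero] at h3 ⊢
  rw [h2] at h1
  have : |q n| ≤ |q n - x j n| + |x j n| := by
    calc |q n| = |(q n - x j n) + x j n| := by ring_nf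
    _ ≤ |q n - x j n| + |x j n| := abs_add_le _ _
  rw [abs_sub_comm] at this
  have h1' : |x j n - q n| ≤ ‖x j - q‖ := h1
  linarith

lemma exists_near_point {Y Z : Type*} [PseudoMetricSpace Y] [MetricSpace Z] [CompleteSpace Z]
    {M : Set Y} (hM : M.Nonempty) (p : Y) (f : M → Z) (K : NNReal) (hf : LipschitzWith K f) :
    ∃ z : Z, ∀ m (hm : m ∈ M), dist (f ⟨m, hm⟩) z ≤ 3 * K * dist m p := by
  by_cases h0 : Metric.infDist p M = 0
  · have hpc : p ∈ closure M := (Metric.mem_closure_iff_infDist_zero hM).2 h0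
    obtain ⟨u, hu, hup⟩ := mem_closure_iff_seq_limit.1 hpc
    have hcu : CauchySeq u := hup.cauchySeq
    have hcv : CauchySeq (fun n => (⟨u n, hu n⟩ : M)) := by
      rw [Metric.cauchySeq_iff] at hcu ⊢
      simpa [Subtype.dist_eq] using hcu
    have hcf : CauchySeq (fun n => f ⟨u n, hu n⟩) :=
      hf.uniformContinuous.comp_cauchySeq hcv
    obtain ⟨z, hz⟩ := cauchySeq_tendsto_of_complete hcf
    refine ⟨z, fun m hm => ?_⟩
    have h1 : Tendsto (fun n => dist (f ⟨m, hm⟩) (f ⟨u n, hu n⟩)) atTop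
        (nhds (dist (f ⟨m, hm⟩) z)) := tendsto_const_nhds.dist hz
    have h2 : Tendsto (fun n => (K : ℝ) * dist m (u n)) atTop
        (nhds ((K : ℝ) * dist m p)) := (tendsto_const_nhds.dist hup).const_mul _
    have hle : dist (f ⟨m, hm⟩) z ≤ (K : ℝ) * dist m p := by
      refine le_of_tendsto_of_tendsto' h1 h2 (fun n => ?_)
      have : dist (f ⟨m, hm⟩) (f ⟨u n, hu n⟩) ≤ (K : ℝ) * dist m (u n) := by
        simpa [Subtype.dist_eq] using hf.dist_le_mul ⟨m, hm⟩ ⟨u n, hu n⟩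
      exact this
    nlinarith [dist_nonneg (x := m) (y := p), K.coe_nonneg]
  · have hpos : 0 < Metric.infDist p M :=
      lt_of_le_of_ne Metric.infDist_nonneg (Ne.symm h0)
    obtain ⟨m0, hm0, hdm0⟩ := (Metric.infDist_lt_iff hM).1
      (show Metric.infDist p M < 2 * Metric.infDist p M by linarith)
    refine ⟨f ⟨m0, hm0⟩, fun m hm => ?_⟩
    have h1 : dist (f ⟨m, hm⟩) (f ⟨m0, hm0⟩) ≤ (K : ℝ) * dist m m0 := by
      simpa [Subtype.dist_eq] using hf.dist_le_mul ⟨m, hm⟩ ⟨m0, hm0⟩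
    have h2 : dist m m0 ≤ dist m p + dist p m0 := dist_triangle m p m0
    have h3 : Metric.infDist p M ≤ dist p m := Metric.infDist_le_dist_of_mem hm
    rw [dist_comm p m] at h3
    nlinarith [K.coe_nonneg, dist_nonneg (x := m) (y := p)]

lemma extend_three {Y Z : Type*} [SeminormedAddCommGroup Y] [NormedAddCommGroup Z]
    [CompleteSpace Z] (M : Set Y) (p : Y) (f : M → Z) (K : NNReal) (hf : LipschitzWith K f) :
    ∃ F : ↥(insert p M : Set Y) → Z, LipschitzWith ((3:ℝ).toNNReal * K) F ∧
      ∀ (y : Y) (hy : y ∈ M), F ⟨y, Set.mem_insert_of_mem p hy⟩ = f ⟨y, hy⟩ := by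
  rcases M.eq_empty_or_nonempty with hME | hM
  · subst hME
    exact ⟨fun _ => 0, (LipschitzWith.const _).weaken zero_le,
      fun y hy => absurd hy (Set.notMem_empty y)⟩
  · classical
    obtain ⟨z, hz⟩ := exists_near_point hM p f K hf
    refine ⟨fun x => if h : (x : Y) ∈ M then f ⟨x, h⟩ else z, ?_, fun y hy => dif_pos hy⟩
    apply LipschitzWith.of_dist_le_mul
    rintro ⟨a, ha⟩ ⟨b, hb⟩
    have hcoe : (((3:ℝ).toNNReal * K : NNReal) : ℝ) = 3 * K := by
      rw [NNReal.coe_mul, Real.coe_toNNReal _ (by norm_num)]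
    rw [hcoe, Subtype.dist_eq]
    by_cases haM : a ∈ M <;> by_cases hbM : b ∈ M
    · simp only [dif_pos haM, dif_pos hbM]
      have h1 : dist (f ⟨a, haM⟩) (f ⟨b, hbM⟩) ≤ (K : ℝ) * dist a b := by
        simpa [Subtype.dist_eq] using hf.dist_le_mul ⟨a, haM⟩ ⟨b, hbM⟩
      nlinarith [K.coe_nonneg, dist_nonneg (x := a) (y := b)]
    · have hbp : b = p := (hb.resolve_right hbM)
      simp only [dif_pos haM, dif_neg hbM]
      subst hbp
      exact hz a haM
    · have hap : a = p := (ha.resolve_right haM)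
      simp only [dif_neg haM, dif_pos hbM]
      subst hap
      rw [dist_comm, dist_comm (α := Y)]
      exact hz b hbM
    · simp only [dif_neg haM, dif_neg hbM, dist_self]
      positivity

/-- For every infinite-dimensional Banach space `X`: `K(X) ≤ e₁ˢ(X, c₀)`. -/
theorem kottman_le_e1s_c0
    (X : Type) [NormedAddCommGroup X] [NormedSpace ℝ X] [CompleteSpace X]
    (hX : ¬ FiniteDimensional ℝ X) :
    Kottman X ≤ e1s X ↥c0 := by
  classical
  have hclosed : IsClosed ((c0 : Set (lp (fun _ : ℕ => ℝ) ⊤))) := c0_isClosed'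
  haveI : CompleteSpace ↥c0 := hclosed.completeSpace_coe
  rw [Kottman, e1s]
  apply Real.sSup_le
  · rintro c ⟨y, hy1, rfl⟩
    set D := {d : ℝ | ∃ n m : ℕ, n ≠ m ∧ d = ‖y n - y m‖} with hD
    refine le_csInf ⟨3, by norm_num, fun M hMsep p f K hf => extend_three M p f K hf⟩ ?_
    rintro l ⟨hl, hext⟩
    by_cases hc : sInf D ≤ 0
    · linarith
    push_neg at hc
    have hDbdd : BddBelow D := ⟨0, by rintro d ⟨n, m, hnm, rfl⟩; positivity⟩
    have hsep : ∀ n m : ℕ, n ≠ m → sInf D ≤ ‖y n - y m‖ := fun n m h =>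
      csInf_le hDbdd ⟨n, m, h, rfl⟩
    have hyinj : Function.Injective y := by
      intro n m hnm
      by_contra h
      have := hsep n m h
      rw [hnm, sub_self, norm_zero] at this
      linarith
    set c := sInf D with hc_def
    -- the "basis" sequence in c0
    have hmem : ∀ n : ℕ, lp.single ⊤ n (c/2) ∈ c0 := by
      intro n
      show Tendsto (⇑(lp.single ⊤ n (c/2))) atTop (nhds 0)
      have hev : ∀ᶠ j in atTop, (0 : ℝ) = (⇑(lp.single (E := fun _ : ℕ => ℝ) ⊤ n (c/2))) j := by
        rw [eventually_atTop]
        exact ⟨n + 1, fun j hj => (lp.single_apply_ne (E := fun _ : ℕ => ℝ) ⊤ n (c/2) (j := j) (by omega)).symm⟩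
      exact tendsto_const_nhds.congr' hev
    set e : ℕ → ↥c0 := fun n => ⟨lp.single ⊤ n (c/2), hmem n⟩ with he
    set f : ↥(Set.range y) → ↥c0 := fun x => e (x.2.choose) with hf
    have hidx : ∀ (n : ℕ) (h : y n ∈ Set.range y), (h.choose) = n := by
      intro n h
      exact hyinj h.choose_spec
    have key : ∀ n m : ℕ, n ≠ m → ∀ j : ℕ,
        ‖(lp.single (E := fun _ : ℕ => ℝ) ⊤ n (c/2) : lp (fun _ : ℕ => ℝ) ⊤) j
          - (lp.single (E := fun _ : ℕ => ℝ) ⊤ m (c/2) : lp (fun _ : ℕ => ℝ) ⊤) j‖ ≤ c/2 := by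
      intro n m hnm j
      by_cases hjn : j = n
      · subst hjn
        rw [lp.single_apply_self, lp.single_apply_ne ⊤ m _ hnm, sub_zero, Real.norm_eq_abs,
          abs_of_nonneg (by linarith : (0:ℝ) ≤ c/2)]
      · rw [lp.single_apply_ne ⊤ n _ hjn]
        by_cases hjm : j = m
        · subst hjm
          rw [lp.single_apply_self, zero_sub, norm_neg, Real.norm_eq_abs,
            abs_of_nonneg (by linarith : (0:ℝ) ≤ c/2)]
        · rw [lp.single_apply_ne ⊤ m _ hjm]
          simp
          linarith
    have hnorme : ∀ n m : ℕ, n ≠ m → ‖(e n : lp (fun _ : ℕ => ℝ) ⊤) - e m‖ ≤ c / 2 := by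
      intro n m hnm
      apply lp.norm_le_of_forall_le (by linarith)
      intro j
      rw [lp.coeFn_sub, Pi.sub_apply]
      exact key n m hnm j
    have hlip : LipschitzWith 2⁻¹ f := by
      apply LipschitzWith.of_dist_le_mul
      intro a b
      set n := a.2.choose with hn
      set m := b.2.choose with hm
      have hyn : y n = ↑a := a.2.choose_spec
      have hym : y m = ↑b := b.2.choose_spec
      by_cases hnm : n = m
      · have : f a = f b := by rw [hf]; simp only; rw [← hn, ← hm, hnm]
        rw [this, dist_self]
        positivity
      · have hdistf : dist (f a) (f b) ≤ c / 2 := by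
          rw [Subtype.dist_eq, dist_eq_norm]
          exact hnorme n m hnm
        have hdistab : c ≤ dist a b := by
          rw [Subtype.dist_eq, dist_eq_norm, ← hyn, ← hym]
          exact hsep n m hnm
        have h2 : ((2⁻¹ : NNReal) : ℝ) = 1/2 := by norm_num
        rw [h2]
        have : (0:ℝ) ≤ dist a b := dist_nonneg
        linarith
    obtain ⟨F, hF, hFeq⟩ := hext (Set.range y) ((Set.countable_range y).isSeparable)
      0 f 2⁻¹ hlip
    set F0 := F ⟨0, Set.mem_insert 0 _⟩ with hF0def
    have hF0 : Tendsto (⇑(F0 : lp (fun _ : ℕ => ℝ) ⊤)) atTop (nhds 0) := F0.2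
    refine le_of_forall_pos_le_add ?_
    intro ε hε
    obtain ⟨N, hN⟩ := Metric.tendsto_atTop.1 hF0 (ε/2) (by linarith)
    have hNval : |((F0 : lp (fun _ : ℕ => ℝ) ⊤)) N| < ε/2 := by
      have := hN N le_rfl
      rwa [Real.dist_eq, sub_zero] at this
    have hymem : y N ∈ Set.range y := ⟨N, rfl⟩
    have hFn : F ⟨y N, Set.mem_insert_of_mem 0 hymem⟩ = f ⟨y N, hymem⟩ := hFeq (y N) hymem
    have hfval : f ⟨y N, hymem⟩ = e N := by
      rw [hf]
      simp only
      congr 1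
      exact hidx N hymem
    -- distance estimate from the Lipschitz bound of F
    have hd := hF.dist_le_mul ⟨0, Set.mem_insert 0 _⟩ ⟨y N, Set.mem_insert_of_mem 0 hymem⟩
    have hdist01 : dist (0 : X) (y N) ≤ 1 := by
      rw [dist_eq_norm, zero_sub, norm_neg]
      exact hy1 N
    have hcoeK : ((l.toNNReal * 2⁻¹ : NNReal) : ℝ) = l / 2 := by
      rw [NNReal.coe_mul, Real.coe_toNNReal _ hl.le]
      push_cast
      ring
    have hdsub : dist (⟨0, Set.mem_insert 0 _⟩ : ↥(insert 0 (Set.range y) : Set X))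
        ⟨y N, Set.mem_insert_of_mem 0 hymem⟩ = dist (0 : X) (y N) := Subtype.dist_eq _ _
    rw [hdsub, hcoeK, hFn, hfval] at hd
    have hdpos : (0:ℝ) ≤ dist (0 : X) (y N) := dist_nonneg
    have hd2 : dist F0 (e N) ≤ l / 2 := by
      calc dist F0 (e N) ≤ l / 2 * dist (0 : X) (y N) := hd
      _ ≤ l / 2 * 1 := by
          apply mul_le_mul_of_nonneg_left hdist01 (by linarith)
      _ = l / 2 := by ring
    -- coordinate estimate
    have hcoord : c/2 - |((F0 : lp (fun _ : ℕ => ℝ) ⊤)) N| ≤ dist F0 (e N) := by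
      rw [Subtype.dist_eq, dist_eq_norm]
      have h1 : ‖((F0 : lp (fun _ : ℕ => ℝ) ⊤) - e N) N‖
          ≤ ‖(F0 : lp (fun _ : ℕ => ℝ) ⊤) - e N‖ :=
        lp.norm_apply_le_norm ENNReal.top_ne_zero _ N
      have h2 : ((F0 : lp (fun _ : ℕ => ℝ) ⊤) - e N) N
          = (F0 : lp (fun _ : ℕ => ℝ) ⊤) N - c/2 := by
        rw [lp.coeFn_sub, Pi.sub_apply]
        congr 1
        exact lp.single_apply_self (E := fun _ : ℕ => ℝ) ⊤ N (c/2)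
      rw [h2] at h1
      have h3 : c/2 - |((F0 : lp (fun _ : ℕ => ℝ) ⊤)) N|
          ≤ |((F0 : lp (fun _ : ℕ => ℝ) ⊤)) N - c/2| := by
        have := abs_sub_abs_le_abs_sub (c/2) ((F0 : lp (fun _ : ℕ => ℝ) ⊤) N)
        rw [abs_of_nonneg (by linarith : (0:ℝ) ≤ c/2)] at this
        rw [abs_sub_comm] at this
        linarith
      calc c/2 - |((F0 : lp (fun _ : ℕ => ℝ) ⊤)) N| ≤ |((F0 : lp (fun _ : ℕ => ℝ) ⊤)) N - c/2| := h3
      _ ≤ _ := h1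
    linarith
  · apply Real.sInf_nonneg
    rintro l ⟨hl, -⟩
    exact hl.le
end

section
/- In c0, the set {e_n : n ∈ ℕ} of canonical unit vectors has diameter 1, and every y ∈ c0 satisfies sup_n ‖e_n − y‖ ≥ 1; consequently the separable Jung constant satisfies J_s(c0) = 2. -/
open Filter
set_option synthInstance.maxHeartbeats 1000000
set_option maxHeartbeats 1000000

/-- The `n`-th canonical unit vector, as an element of `c₀`. -/
noncomputable def e (n : ℕ) : ↥c0 :=
  ⟨lp.single ⊤ n (1 : ℝ), by
    show Tendsto (⇑(lp.single ⊤ n (1:ℝ) : lp (fun _ : ℕ => ℝ) ⊤)) atTop (nhds 0)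
    have hcoe : ⇑(lp.single ⊤ n (1:ℝ) : lp (fun _ : ℕ => ℝ) ⊤) = Pi.single n (1:ℝ) := by
      ext k
      exact lp.single_apply (E := fun _ : ℕ => ℝ) ⊤ n (1:ℝ) k
    rw [hcoe]
    refine Tendsto.congr' ?_ (tendsto_const_nhds (x := (0:ℝ)))
    filter_upwards [eventually_gt_atTop n] with k hk
    exact (Pi.single_eq_of_ne (M := fun _ : ℕ => ℝ) hk.ne' (1:ℝ)).symm⟩

lemma e_coe (n k : ℕ) : ((e n : ↥c0) : lp (fun _ : ℕ => ℝ) ⊤) k = Pi.single (M := fun _ : ℕ => ℝ) n (1:ℝ) k :=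
  lp.single_apply (E := fun _ : ℕ => ℝ) ⊤ n 1 k

lemma norm_sub_coord (x y : ↥c0) (k : ℕ) :
    ‖((x : lp (fun _ : ℕ => ℝ) ⊤) k) - ((y : lp (fun _ : ℕ => ℝ) ⊤) k)‖ ≤ ‖x - y‖ := by
  have h1 : ‖x - y‖ = ‖((x - y : ↥c0) : lp (fun _ : ℕ => ℝ) ⊤)‖ := rfl
  have h2 := lp.norm_apply_le_norm (E := fun _ : ℕ => ℝ) ENNReal.top_ne_zero
    ((x - y : ↥c0) : lp (fun _ : ℕ => ℝ) ⊤) k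
  have h3 : ((x - y : ↥c0) : lp (fun _ : ℕ => ℝ) ⊤) k
      = (x : lp (fun _ : ℕ => ℝ) ⊤) k - (y : lp (fun _ : ℕ => ℝ) ⊤) k := by
    have h4 : ((x - y : ↥c0) : lp (fun _ : ℕ => ℝ) ⊤)
        = (x : lp (fun _ : ℕ => ℝ) ⊤) - y := rfl
    rw [h4, lp.coeFn_sub]; rfl
  rw [h1]
  rw [h3] at h2
  exact h2

lemma norm_sub_le_of_coord (x y : ↥c0) {C : ℝ} (hC : 0 ≤ C)
    (h : ∀ k, ‖((x : lp (fun _ : ℕ => ℝ) ⊤) k) - ((y : lp (fun _ : ℕ => ℝ) ⊤) k)‖ ≤ C) :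
    ‖x - y‖ ≤ C := by
  have h1 : ‖x - y‖ = ‖((x - y : ↥c0) : lp (fun _ : ℕ => ℝ) ⊤)‖ := rfl
  rw [h1]
  refine lp.norm_le_of_forall_le hC fun k => ?_
  have : ((x - y : ↥c0) : lp (fun _ : ℕ => ℝ) ⊤) = (x : lp (fun _ : ℕ => ℝ) ⊤) - y := rfl
  rw [this, lp.coeFn_sub]
  simpa using h k

lemma norm_e_sub_e_le (n m : ℕ) : ‖e n - e m‖ ≤ 1 := by
  refine norm_sub_le_of_coord _ _ zero_le_one fun k => ?_
  rw [e_coe, e_coe]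
  rcases eq_or_ne k n with rfl | hn
  · rcases eq_or_ne k m with rfl | hm
    · simp
    · rw [Pi.single_eq_same, Pi.single_eq_of_ne (M := fun _ : ℕ => ℝ) hm]; norm_num
  · rcases eq_or_ne k m with rfl | hm
    · rw [Pi.single_eq_of_ne (M := fun _ : ℕ => ℝ) hn, Pi.single_eq_same]; norm_num
    · rw [Pi.single_eq_of_ne (M := fun _ : ℕ => ℝ) hn,
        Pi.single_eq_of_ne (M := fun _ : ℕ => ℝ) hm]; norm_num

lemma one_le_norm_e_sub_e {n m : ℕ} (h : n ≠ m) : 1 ≤ ‖e n - e m‖ := by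
  have := norm_sub_coord (e n) (e m) n
  rw [e_coe, e_coe, Pi.single_eq_same, Pi.single_eq_of_ne (M := fun _ : ℕ => ℝ) h] at this
  simpa using this

lemma dist_e_e {n m : ℕ} (h : n ≠ m) : dist (e n) (e m) = 1 := by
  rw [dist_eq_norm]
  exact le_antisymm (norm_e_sub_e_le n m) (one_le_norm_e_sub_e h)

lemma norm_e_sub_le (n : ℕ) (y : ↥c0) : ‖e n - y‖ ≤ 1 + ‖y‖ := by
  calc ‖e n - y‖ ≤ ‖e n‖ + ‖y‖ := norm_sub_le _ _
  _ ≤ 1 + ‖y‖ := by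
      have : ‖e n - 0‖ ≤ 1 := by
        refine norm_sub_le_of_coord _ _ zero_le_one fun k => ?_
        rw [e_coe]
        have : ((0 : ↥c0) : lp (fun _ : ℕ => ℝ) ⊤) k = 0 := by
          rw [Submodule.coe_zero, lp.coeFn_zero]; rfl
        rw [this, sub_zero]
        rcases eq_or_ne k n with rfl | hn
        · simp
        · rw [Pi.single_eq_of_ne (M := fun _ : ℕ => ℝ) hn]; norm_num
      rw [sub_zero] at this
      linarith

lemma one_le_sup_dist (y : ↥c0) : 1 ≤ ⨆ n : ℕ, ‖e n - y‖ := by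
  have hbdd : BddAbove (Set.range fun n : ℕ => ‖e n - y‖) :=
    ⟨1 + ‖y‖, by rintro _ ⟨n, rfl⟩; exact norm_e_sub_le n y⟩
  refine le_of_forall_pos_le_add fun ε hε => ?_
  have hy : Tendsto (⇑(y : lp (fun _ : ℕ => ℝ) ⊤)) atTop (nhds 0) := y.2
  have := (hy.eventually (Metric.ball_mem_nhds (0:ℝ) hε)).exists
  obtain ⟨n, hn⟩ := this
  rw [Real.dist_0_eq_abs] at hn
  have hcoord := norm_sub_coord (e n) y n
  rw [e_coe, Pi.single_eq_same] at hcoord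
  have h1 : 1 - ε ≤ ‖e n - y‖ := by
    have : 1 - |((y : lp (fun _ : ℕ => ℝ) ⊤) n)| ≤ |1 - ((y : lp (fun _ : ℕ => ℝ) ⊤) n)| := by
      have := abs_sub_abs_le_abs_sub (1:ℝ) ((y : lp (fun _ : ℕ => ℝ) ⊤) n)
      simpa using this
    have h2 : 1 - ε ≤ |1 - ((y : lp (fun _ : ℕ => ℝ) ⊤) n)| := by linarith
    calc 1 - ε ≤ |1 - ((y : lp (fun _ : ℕ => ℝ) ⊤) n)| := h2
    _ ≤ ‖e n - y‖ := by simpa [Real.norm_eq_abs] using hcoord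
  have := le_ciSup_of_le hbdd n h1
  linarith

/-- The (Chebyshev) radius of a subset of a normed space:
`r(A) = inf_{b ∈ X} sup_{a ∈ A} ‖a − b‖`. -/
noncomputable def radius {X : Type} [SeminormedAddCommGroup X] (A : Set X) : ℝ :=
  ⨅ b : X, ⨆ a : A, ‖(a : X) - b‖

/-- The separable Jung constant
`J_s(X) = sup {2 r(A)/δ(A) : A closed, bounded, separable, δ(A) > 0}`. -/
noncomputable def JungS (X : Type) [SeminormedAddCommGroup X] : ℝ :=
  sSup {c : ℝ | ∃ A : Set X, IsClosed A ∧ Bornology.IsBounded A ∧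
    TopologicalSpace.IsSeparable A ∧ 0 < Metric.diam A ∧
    c = 2 * radius A / Metric.diam A}


lemma norm_e_le_one (n : ℕ) : ‖e n‖ ≤ 1 := by
  have h : ‖e n - (0 : ↥c0)‖ ≤ 1 := by
    refine norm_sub_le_of_coord _ _ zero_le_one fun k => ?_
    rw [e_coe]
    have h0 : ((0 : ↥c0) : lp (fun _ : ℕ => ℝ) ⊤) k = 0 := by
      rw [Submodule.coe_zero, lp.coeFn_zero]; rfl
    rw [h0, sub_zero]
    rcases eq_or_ne k n with rfl | hn
    · simp
    · rw [Pi.single_eq_of_ne (M := fun _ : ℕ => ℝ) hn]; norm_num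
  rwa [sub_zero] at h


lemma diam_range_e : Metric.diam (Set.range e) = 1 := by
  refine le_antisymm (Metric.diam_le_of_forall_dist_le zero_le_one ?_) ?_
  · rintro _ ⟨n, rfl⟩ _ ⟨m, rfl⟩
    rw [dist_eq_norm]; exact norm_e_sub_e_le n m
  · have hb : Bornology.IsBounded (Set.range e) := by
      rw [Metric.isBounded_iff]
      exact ⟨1, by rintro _ ⟨n, rfl⟩ _ ⟨m, rfl⟩; rw [dist_eq_norm]; exact norm_e_sub_e_le n m⟩
    have := Metric.dist_le_diam_of_mem hb (Set.mem_range_self 0) (Set.mem_range_self 1)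
    rwa [dist_e_e (by norm_num)] at this

lemma isBounded_range_e : Bornology.IsBounded (Set.range e) := by
  rw [Metric.isBounded_iff]
  exact ⟨1, by rintro _ ⟨n, rfl⟩ _ ⟨m, rfl⟩; rw [dist_eq_norm]; exact norm_e_sub_e_le n m⟩

lemma isClosed_range_e : IsClosed (Set.range e) := by
  rw [← isOpen_compl_iff]
  rw [Metric.isOpen_iff]
  intro x hx
  by_cases hnear : ∃ n, dist x (e n) < 1/3
  · obtain ⟨n, hn⟩ := hnear
    have hxn : x ≠ e n := fun h => hx (h ▸ Set.mem_range_self n)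
    have hd : 0 < dist x (e n) := dist_pos.mpr hxn
    refine ⟨min (dist x (e n)) (1/3), by positivity, ?_⟩
    intro z hz
    rintro ⟨m, rfl⟩
    rw [Metric.mem_ball] at hz
    rcases eq_or_ne m n with rfl | hmn
    · have h2 : dist (e m) x < dist x (e m) := lt_of_lt_of_le hz (min_le_left _ _)
      rw [dist_comm] at h2
      exact absurd h2 (lt_irrefl _)
    · have h1 : dist (e m) (e n) ≤ dist (e m) x + dist x (e n) := dist_triangle _ _ _
      rw [dist_e_e hmn] at h1
      have h2 : dist (e m) x < 1/3 := lt_of_lt_of_le hz (min_le_right _ _)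
      linarith
  · push_neg at hnear
    refine ⟨1/3, by norm_num, ?_⟩
    intro z hz
    rintro ⟨m, rfl⟩
    rw [Metric.mem_ball] at hz
    exact absurd (hnear m) (by rw [dist_comm] at hz; linarith)

lemma radius_range_e : radius (Set.range e) = 1 := by
  refine le_antisymm ?_ ?_
  · have hle : (⨆ a : (Set.range e), ‖(a : ↥c0) - (0 : ↥c0)‖) ≤ 1 := by
      refine Real.iSup_le (fun a => ?_) zero_le_one
      obtain ⟨n, hn⟩ := a.2
      rw [sub_zero, ← hn]
      exact norm_e_le_one n
    have hbdd : BddBelow (Set.range fun b : ↥c0 => ⨆ a : (Set.range e), ‖(a : ↥c0) - b‖) := by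
      refine ⟨0, ?_⟩
      rintro _ ⟨b, rfl⟩
      exact Real.iSup_nonneg fun a => norm_nonneg _
    exact le_trans (ciInf_le hbdd 0) hle
  · refine le_ciInf fun b => ?_
    have h1 : (⨆ n : ℕ, ‖e n - b‖) ≤ ⨆ a : (Set.range e), ‖(a : ↥c0) - b‖ := by
      rw [iSup_range' (fun a : ↥c0 => ‖a - b‖) e]
    exact le_trans (one_le_sup_dist b) h1

lemma two_mem_jungS_set : (2:ℝ) ∈ {c : ℝ | ∃ A : Set ↥c0, IsClosed A ∧ Bornology.IsBounded A ∧
    TopologicalSpace.IsSeparable A ∧ 0 < Metric.diam A ∧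
    c = 2 * radius A / Metric.diam A} :=
  ⟨Set.range e, isClosed_range_e, isBounded_range_e,
   (Set.countable_range e).isSeparable, by rw [diam_range_e]; norm_num,
   by rw [radius_range_e, diam_range_e]; norm_num⟩

lemma jungS_set_ub : ∀ c ∈ {c : ℝ | ∃ A : Set ↥c0, IsClosed A ∧ Bornology.IsBounded A ∧
    TopologicalSpace.IsSeparable A ∧ 0 < Metric.diam A ∧
    c = 2 * radius A / Metric.diam A}, c ≤ 2 := by
  rintro c ⟨A, hcl, hbd, hsep, hdiam, rfl⟩
  have hA : A.Nonempty := by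
    by_contra h
    rw [Set.not_nonempty_iff_eq_empty] at h
    rw [h, Metric.diam_empty] at hdiam
    exact lt_irrefl _ hdiam
  obtain ⟨b, hb⟩ := hA
  have hrad : radius A ≤ Metric.diam A := by
    have hbdd : BddBelow (Set.range fun b : ↥c0 => ⨆ a : A, ‖(a:↥c0) - b‖) :=
      ⟨0, by rintro _ ⟨b', rfl⟩; exact Real.iSup_nonneg fun a => norm_nonneg _⟩
    refine le_trans (ciInf_le hbdd b) ?_
    refine Real.iSup_le (fun a => ?_) Metric.diam_nonneg
    rw [← dist_eq_norm]
    exact Metric.dist_le_diam_of_mem hbd a.2 hb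
  rw [div_le_iff₀ hdiam]
  linarith

/-- In `c₀`, the set of canonical unit vectors has diameter 1, every point of `c₀`
is at supremum distance at least 1 from it, and consequently `J_s(c₀) = 2`. -/
theorem jungS_c0_eq_two :
    Metric.diam (Set.range e) = 1 ∧
    (∀ y : ↥c0, 1 ≤ ⨆ n : ℕ, ‖e n - y‖) ∧
    JungS ↥c0 = 2 := by
  refine ⟨diam_range_e, one_le_sup_dist, ?_⟩
  exact le_antisymm (csSup_le ⟨2, two_mem_jungS_set⟩ jungS_set_ub)
    (le_csSup ⟨2, jungS_set_ub⟩ two_mem_jungS_set)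
end
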